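/- Cumulativity for arguments: let Γ be an argumentative theory and suppose Γ ⊢_Arg ⟨A1 : α1⟩ (i.e., A1 is a generalized argument for α1 based on Γ). Then Γ ∪ {⟨A1 : α1⟩} ⊢_Arg ⟨A2 : α2⟩ if and only if Γ ⊢_Arg ⟨A2 : α2⟩. -/
import Mathlib


/-- Literals: atoms or their strong negations (`~p` treated as a fresh atom). -/
inductive Lit : Type
  | pos : ℕ → Lit
  | neg : ℕ → Lit
deriving DecidableEq

/-- Wffs of the propositional Horn-like language: literals (facts)
and rules `β ← α1,...,αk` with literal head and body. -/
inductive Wff : Type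
  | lit : Lit → Wff
  | rule : Lit → List Lit → Wff
deriving DecidableEq

/-- SLD derivability: facts in `P` are derivable; if a rule of `P`
has all its body literals derivable, its head is derivable. -/
inductive Sld (P : Set Wff) : Lit → Prop
  | fact {h : Lit} : Wff.lit h ∈ P → Sld P h
  | mp {h : Lit} {body : List Lit} : Wff.rule h body ∈ P →
      (∀ a ∈ body, Sld P a) → Sld P h

/-- A set of wffs is contradictory iff complementary literals `p` and `~p`
are both SLD-derivable from it. -/
def Contra (S : Set Wff) : Prop := ∃ n, Sld S (.pos n) ∧ Sld S (.neg n)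

/-- The non-defeasible (strict) part Π(Γ) of a labeled theory. -/
def PiSet (Γ : Set (Set Wff × Wff)) : Set Wff := {f | (∅, f) ∈ Γ}

/-- The defeasible wffs of Γ: those α with ⟨{α} : α⟩ ∈ Γ. -/
def Defeasibles (Γ : Set (Set Wff × Wff)) : Set Wff := {f | ({f}, f) ∈ Γ}

/-- All (defeasible and non-defeasible) wffs of Γ. -/
def AllWffs (Γ : Set (Set Wff × Wff)) : Set Wff := PiSet Γ ∪ Defeasibles Γ

/-- An argumentative theory: a finite set of basic declarative units
⟨∅ : α⟩ or ⟨{α} : α⟩ whose strict part is non-contradictory. -/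
def IsArgTheory (Γ : Set (Set Wff × Wff)) : Prop :=
  Γ.Finite ∧ (∀ p ∈ Γ, p.1 = ∅ ∨ p.1 = {p.2}) ∧ ¬Contra (PiSet Γ)

/-- Conclusions of the labeled consequence relation: wffs or conjunctions of literals. -/
inductive Concl : Type
  | wff : Wff → Concl
  | conj : List Lit → Concl

/-- The argumentative consequence relation ⊢_Arg, generated by
Intro-NR, Intro-RE, Intro-∧ and Elim-← (each with its consistency side condition). -/
inductive ArgDeriv (Γ : Set (Set Wff × Wff)) : Set Wff → Concl → Prop
  | introNR {f : Wff} : (∅, f) ∈ Γ → ArgDeriv Γ ∅ (.wff f)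
  | introRE {Φ : Set Wff} {f : Wff} : (Φ, f) ∈ Γ → ¬Contra (PiSet Γ ∪ Φ) →
      ArgDeriv Γ Φ (.wff f)
  | introAnd {L : List (Set Wff × Lit)} :
      (∀ p ∈ L, ArgDeriv Γ p.1 (.wff (.lit p.2))) →
      ¬Contra (PiSet Γ ∪ ⋃ p ∈ L, p.1) →
      ArgDeriv Γ (⋃ p ∈ L, p.1) (.conj (L.map Prod.snd))
  | elim {Φ₁ Φ₂ : Set Wff} {h : Lit} {body : List Lit} :
      ArgDeriv Γ Φ₁ (.wff (.rule h body)) →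
      ArgDeriv Γ Φ₂ (.conj body) →
      ¬Contra (PiSet Γ ∪ Φ₁ ∪ Φ₂) →
      ArgDeriv Γ (Φ₁ ∪ Φ₂) (.wff (.lit h))

lemma sld_mono {S T : Set Wff} (h : S ⊆ T) {l : Lit} (hd : Sld S l) : Sld T l := by
  induction hd with
  | fact hm => exact .fact (h hm)
  | mp hm _ ih => exact .mp (h hm) ih

lemma sld_union_lit {S : Set Wff} {l₀ : Lit} (h₀ : Sld S l₀) {l : Lit}
    (hd : Sld (S ∪ {Wff.lit l₀}) l) : Sld S l := by
  induction hd with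
  | fact hm =>
    rcases hm with hm | hm
    · exact .fact hm
    · simp only [Set.mem_singleton_iff, Wff.lit.injEq] at hm
      exact hm ▸ h₀
  | mp hm _ ih =>
    rcases hm with hm | hm
    · exact .mp hm ih
    · simp at hm

lemma contra_union_lit {S : Set Wff} {l₀ : Lit} (h₀ : Sld S l₀) :
    Contra (S ∪ {Wff.lit l₀}) ↔ Contra S := by
  constructor
  · rintro ⟨n, a, b⟩
    exact ⟨n, sld_union_lit h₀ a, sld_union_lit h₀ b⟩
  · rintro ⟨n, a, b⟩
    exact ⟨n, sld_mono Set.subset_union_left a, sld_mono Set.subset_union_left b⟩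

/-- Soundness meaning of a conclusion w.r.t. a wff set. -/
def ConclSound (S : Set Wff) : Concl → Prop
  | .wff (.lit l) => Sld S l
  | .wff (.rule h b) => Wff.rule h b ∈ S
  | .conj L => ∀ l ∈ L, Sld S l

lemma arg_sound {Γ : Set (Set Wff × Wff)} (hstr : ∀ p ∈ Γ, p.1 = ∅ ∨ p.1 = {p.2})
    {Φ : Set Wff} {c : Concl} (hd : ArgDeriv Γ Φ c) : ConclSound (PiSet Γ ∪ Φ) c := by
  induction hd with
  | @introNR f hm =>
    have hf : f ∈ PiSet Γ ∪ (∅ : Set Wff) := Or.inl hm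
    cases f with
    | lit l => exact Sld.fact hf
    | rule h b => exact hf
  | @introRE Φ f hm _ =>
    have hf : f ∈ PiSet Γ ∪ Φ := by
      rcases hstr _ hm with h | h
      · exact Or.inl (show (∅, f) ∈ Γ from h ▸ hm)
      · exact Or.inr (by rw [show Φ = {f} from h]; exact rfl)
    cases f with
    | lit l => exact Sld.fact hf
    | rule h b => exact hf
  | @introAnd L h hnc ih =>
    intro l hl
    simp only [List.mem_map] at hl
    obtain ⟨p, hp, rfl⟩ := hl
    refine sld_mono ?_ (ih p hp)
    intro x hx
    rcases hx with hx | hx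
    · exact Or.inl hx
    · exact Or.inr (Set.mem_biUnion hp hx)
  | @elim Φ₁ Φ₂ h body _ _ hnc ih₁ ih₂ =>
    have hrule : Wff.rule h body ∈ PiSet Γ ∪ (Φ₁ ∪ Φ₂) := by
      rcases ih₁ with h' | h'
      · exact Or.inl h'
      · exact Or.inr (Or.inl h')
    refine Sld.mp hrule (fun a ha => sld_mono ?_ (ih₂ a ha))
    intro x hx
    rcases hx with hx | hx
    · exact Or.inl hx
    · exact Or.inr (Or.inr hx)

lemma contra_congr {Γ : Set (Set Wff × Wff)}
    (hstr : ∀ p ∈ Γ, p.1 = ∅ ∨ p.1 = {p.2}) {A₁ : Set Wff} {α₁ : Wff}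
    (h₁ : ArgDeriv Γ A₁ (.wff α₁)) (Φ : Set Wff) :
    Contra (PiSet (Γ ∪ {(A₁, α₁)}) ∪ Φ) ↔ Contra (PiSet Γ ∪ Φ) := by
  by_cases hA : A₁ = (∅ : Set Wff)
  · subst hA
    have hp : PiSet (Γ ∪ {((∅ : Set Wff), α₁)}) = PiSet Γ ∪ {α₁} := by
      ext f
      simp [PiSet, Prod.ext_iff]
    have hsnd := arg_sound hstr h₁
    rw [Set.union_empty] at hsnd
    cases α₁ with
    | lit l =>
      have hs : Sld (PiSet Γ ∪ Φ) l := sld_mono Set.subset_union_left hsnd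
      rw [hp, Set.union_right_comm]
      exact contra_union_lit hs
    | rule h b =>
      have : PiSet Γ ∪ ({Wff.rule h b} : Set Wff) = PiSet Γ :=
        Set.union_eq_self_of_subset_right (Set.singleton_subset_iff.mpr hsnd)
      rw [hp, this]
  · have hp : PiSet (Γ ∪ {(A₁, α₁)}) = PiSet Γ := by
      ext f
      simp only [PiSet, Set.mem_union, Set.mem_singleton_iff, Prod.ext_iff, Set.mem_setOf_eq]
      constructor
      · rintro (h | ⟨h, _⟩)
        · exact h
        · exact absurd h.symm hA
      · exact Or.inl
    rw [hp]

lemma arg_lift {Γ : Set (Set Wff × Wff)} {A₁ : Set Wff} {α₁ : Wff}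
    (hc : ∀ Φ, Contra (PiSet (Γ ∪ {(A₁, α₁)}) ∪ Φ) ↔ Contra (PiSet Γ ∪ Φ))
    {Φ : Set Wff} {c : Concl} (hd : ArgDeriv Γ Φ c) :
    ArgDeriv (Γ ∪ {(A₁, α₁)}) Φ c := by
  induction hd with
  | introNR hm => exact .introNR (Or.inl hm)
  | introRE hm hnc => exact .introRE (Or.inl hm) (by rw [hc]; exact hnc)
  | introAnd h hnc ih => exact .introAnd ih (by rw [hc]; exact hnc)
  | elim _ _ hnc ih₁ ih₂ =>
    exact .elim ih₁ ih₂ (by rw [Set.union_assoc, hc, ← Set.union_assoc]; exact hnc)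

lemma arg_drop {Γ : Set (Set Wff × Wff)} {A₁ : Set Wff} {α₁ : Wff}
    (h₁ : ArgDeriv Γ A₁ (.wff α₁))
    (hc : ∀ Φ, Contra (PiSet (Γ ∪ {(A₁, α₁)}) ∪ Φ) ↔ Contra (PiSet Γ ∪ Φ))
    {Φ : Set Wff} {c : Concl} (hd : ArgDeriv (Γ ∪ {(A₁, α₁)}) Φ c) :
    ArgDeriv Γ Φ c := by
  induction hd with
  | @introNR f hm =>
    rcases hm with hm | hm
    · exact .introNR hm
    · rw [Set.mem_singleton_iff, Prod.ext_iff] at hm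
      obtain ⟨ha, hf⟩ := hm
      subst hf
      subst ha
      exact h₁
  | @introRE Φ f hm hnc =>
    rcases hm with hm | hm
    · exact .introRE hm (by rw [← hc]; exact hnc)
    · rw [Set.mem_singleton_iff, Prod.ext_iff] at hm
      obtain ⟨ha, hf⟩ := hm
      subst hf
      subst ha
      exact h₁
  | introAnd h hnc ih => exact .introAnd ih (by rw [← hc]; exact hnc)
  | elim _ _ hnc ih₁ ih₂ =>
    exact .elim ih₁ ih₂
      (by rw [Set.union_assoc, ← hc, ← Set.union_assoc]; exact hnc)

/-- Cumulativity for arguments: if Γ ⊢_Arg ⟨A₁ : α₁⟩, then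
Γ ∪ {⟨A₁ : α₁⟩} ⊢_Arg ⟨A₂ : α₂⟩ iff Γ ⊢_Arg ⟨A₂ : α₂⟩. -/
theorem arg_cumulative (Γ : Set (Set Wff × Wff)) (hΓ : IsArgTheory Γ)
    (A₁ A₂ : Set Wff) (α₁ α₂ : Wff)
    (h₁ : ArgDeriv Γ A₁ (.wff α₁)) :
    ArgDeriv (Γ ∪ {(A₁, α₁)}) A₂ (.wff α₂) ↔ ArgDeriv Γ A₂ (.wff α₂) := by
  have hc := contra_congr hΓ.2.1 h₁
  exact ⟨fun h => arg_drop h₁ hc h, fun h => arg_lift hc h⟩
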